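/- Let $N\geq 3$, $2\leq r\leq 2^*$, $\mu\geq\mu_0:=S^2(c_0|\{V<c_0\}|^{(2^*-2)/2^*})^{-1}$, where $V\geq 0$ with $|\{V<c_0\}|<\infty$ and $S$ is the best Sobolev constant. Then for all $u$ with $\|u\|_\mu^2:=\int(|\nabla u|^2+\mu V u^2)\,dx<\infty$, one has $\int_{\mathbb{R}^N}|u|^r\,dx\leq |\{V<c_0\}|^{(2^*-r)/2^*}S^{-r}\|u\|_\mu^r$. -/

import Mathlib

/-!
Write `p = 2*`, `A = |{V < c₀}|` and `T = ‖u‖_μ²`. Sobolev gives `‖u‖_p² ≤ S⁻² ‖∇u‖₂²`.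
On `{V < c₀}` Hölder bounds `∫ u²` by `A^{(p-2)/p} ‖u‖_p²`, and off it `u² ≤ c₀⁻¹ V u²`; the
choice `μ ≥ μ₀` makes the sum of the two pieces at most `A^{(p-2)/p} S⁻² T`. Interpolating `L^r`
between `L²` and `L^p` and inserting these two bounds, the powers of `T` add up to `T^{r/2}`.
-/

open MeasureTheory

/-- The critical Sobolev exponent `2* = 2N/(N-2)`. -/
noncomputable def twoStar (N : ℕ) : ℝ := 2 * (N : ℝ) / ((N : ℝ) - 2)

theorem two_lt_twoStar {N : ℕ} (hN : 2 < N) : 2 < twoStar N := by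
  have hN' : (2 : ℝ) < N := by exact_mod_cast hN
  rw [twoStar, lt_div_iff₀ (by linarith)]
  linarith

theorem rpow_two_div_le_div_sq {S I G p : ℝ} (hS : 0 < S) (hI : 0 ≤ I) (hG : 0 ≤ G)
    (h : S * I ^ (1 / p) ≤ G ^ (1 / 2 : ℝ)) : I ^ (2 / p) ≤ G / S ^ 2 := by
  have h2 := pow_le_pow_left₀ (by positivity) h 2
  rw [mul_pow, ← Real.rpow_mul_natCast hI, ← Real.sqrt_eq_rpow, Real.sq_sqrt hG] at h2
  rw [le_div_iff₀ (by positivity)]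
  rwa [mul_comm, one_div_mul_eq_div] at h2

theorem rpow_mul_rpow_le_of_le_mul_of_rpow_le {p r A S T a b : ℝ} (hp : 2 < p) (h2r : 2 ≤ r)
    (hrp : r ≤ p) (hA : 0 ≤ A) (hS : 0 < S) (hT : 0 ≤ T) (ha : 0 ≤ a) (hb : 0 ≤ b)
    (haT : a ≤ A ^ ((p - 2) / p) * (T / S ^ 2)) (hbT : b ^ (2 / p) ≤ T / S ^ 2) :
    a ^ ((p - r) / (p - 2)) * b ^ ((r - 2) / (p - 2)) ≤
      A ^ ((p - r) / p) * S ^ (-r) * T ^ (r / 2) := by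
  set Y := T / S ^ 2
  have hY : 0 ≤ Y := by positivity
  have hp2 : 0 < p - 2 := by linarith
  have hα : 0 ≤ (p - r) / (p - 2) := div_nonneg (by linarith) hp2.le
  have hβ : 0 ≤ p / 2 * ((r - 2) / (p - 2)) :=
    mul_nonneg (by linarith) (div_nonneg (by linarith) hp2.le)
  calc a ^ ((p - r) / (p - 2)) * b ^ ((r - 2) / (p - 2))
      = a ^ ((p - r) / (p - 2)) * (b ^ (2 / p)) ^ (p / 2 * ((r - 2) / (p - 2))) := by
        rw [← Real.rpow_mul hb]
        congr 2
        field_simp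
    _ ≤ (A ^ ((p - 2) / p) * Y) ^ ((p - r) / (p - 2)) * Y ^ (p / 2 * ((r - 2) / (p - 2))) := by
        gcongr
    _ = A ^ ((p - 2) / p * ((p - r) / (p - 2))) *
          Y ^ ((p - r) / (p - 2) + p / 2 * ((r - 2) / (p - 2))) := by
        rw [Real.mul_rpow (by positivity) hY, ← Real.rpow_mul hA, mul_assoc,
          Real.rpow_add_of_nonneg hY hα hβ]
    _ = A ^ ((p - r) / p) * Y ^ (r / 2) := by
        congr 2
        · field_simp
        · field_simp
          ring
    _ = A ^ ((p - r) / p) * S ^ (-r) * T ^ (r / 2) := by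
        rw [Real.div_rpow hT (by positivity), ← Real.rpow_two, ← Real.rpow_mul hS.le,
          show (2 : ℝ) * (r / 2) = r by ring, Real.rpow_neg hS.le]
        ring

section

variable {X : Type*} [MeasurableSpace X] {ν : Measure X}

theorem integral_rpow_mul_rpow_le {f g : X → ℝ} (hf0 : 0 ≤ᵐ[ν] f) (hg0 : 0 ≤ᵐ[ν] g)
    (hf : Integrable f ν) (hg : Integrable g ν) {p q : ℝ} (hp : 0 ≤ p) (hq : 0 ≤ q)
    (hpq : p + q = 1) :
    ∫ x, f x ^ p * g x ^ q ∂ν ≤ (∫ x, f x ∂ν) ^ p * (∫ x, g x ∂ν) ^ q := by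
  have hfg : ∀ᵐ x ∂ν, ENNReal.ofReal (f x ^ p * g x ^ q) =
      ENNReal.ofReal (f x) ^ p * ENNReal.ofReal (g x) ^ q := by
    filter_upwards [hf0, hg0] with x hfx hgx
    rw [ENNReal.ofReal_mul (Real.rpow_nonneg hfx p), ENNReal.ofReal_rpow_of_nonneg hfx hp,
      ENNReal.ofReal_rpow_of_nonneg hgx hq]
  have hfg0 : 0 ≤ᵐ[ν] fun x => f x ^ p * g x ^ q := by
    filter_upwards [hf0, hg0] with x hfx hgx
    exact mul_nonneg (Real.rpow_nonneg hfx p) (Real.rpow_nonneg hgx q)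
  rw [integral_eq_lintegral_of_nonneg_ae hfg0
      ((hf.aemeasurable.pow_const p).mul (hg.aemeasurable.pow_const q)).aestronglyMeasurable,
    integral_eq_lintegral_of_nonneg_ae hf0 hf.aestronglyMeasurable,
    integral_eq_lintegral_of_nonneg_ae hg0 hg.aestronglyMeasurable,
    ENNReal.toReal_rpow, ENNReal.toReal_rpow, ← ENNReal.toReal_mul, lintegral_congr_ae hfg]
  exact ENNReal.toReal_mono
    (ENNReal.mul_ne_top (ENNReal.rpow_ne_top_of_nonneg hp hf.lintegral_lt_top.ne)
      (ENNReal.rpow_ne_top_of_nonneg hq hg.lintegral_lt_top.ne))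
    (ENNReal.lintegral_mul_norm_pow_le hf.aemeasurable.ennreal_ofReal
      hg.aemeasurable.ennreal_ofReal hp hq hpq)

theorem integral_abs_rpow_le_interpolation {f : X → ℝ} {a b r : ℝ} (ha : 0 ≤ a) (hab : a < b)
    (har : a ≤ r) (hrb : r ≤ b) (hfa : Integrable (fun x => |f x| ^ a) ν)
    (hfb : Integrable (fun x => |f x| ^ b) ν) :
    ∫ x, |f x| ^ r ∂ν ≤
      (∫ x, |f x| ^ a ∂ν) ^ ((b - r) / (b - a)) * (∫ x, |f x| ^ b ∂ν) ^ ((r - a) / (b - a)) := by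
  have hba : 0 < b - a := sub_pos.2 hab
  have hθ : 0 ≤ (b - r) / (b - a) := div_nonneg (sub_nonneg.2 hrb) hba.le
  have hθ' : 0 ≤ (r - a) / (b - a) := div_nonneg (sub_nonneg.2 har) hba.le
  have hsplit : ∀ x, (|f x| ^ a) ^ ((b - r) / (b - a)) * (|f x| ^ b) ^ ((r - a) / (b - a)) =
      |f x| ^ r := by
    intro x
    rw [← Real.rpow_mul (abs_nonneg _), ← Real.rpow_mul (abs_nonneg _),
      ← Real.rpow_add_of_nonneg (abs_nonneg _) (mul_nonneg ha hθ)
        (mul_nonneg (ha.trans hab.le) hθ')]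
    congr 1
    field_simp
    ring
  simpa only [hsplit] using integral_rpow_mul_rpow_le
    (Filter.Eventually.of_forall fun x => Real.rpow_nonneg (abs_nonneg (f x)) a)
    (Filter.Eventually.of_forall fun x => Real.rpow_nonneg (abs_nonneg (f x)) b) hfa hfb hθ hθ'
    (by field_simp; ring)

theorem setIntegral_abs_rpow_le {f : X → ℝ} {s : Set X} (hs : ν s ≠ ⊤) {p q : ℝ} (hp : 0 < p)
    (hq : 0 ≤ q) (hqp : q ≤ p) (hf : IntegrableOn (fun x => |f x| ^ p) s ν) :
    ∫ x in s, |f x| ^ q ∂ν ≤ (∫ x in s, |f x| ^ p ∂ν) ^ (q / p) * ν.real s ^ (1 - q / p) := by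
  have hpow : ∀ x, (|f x| ^ p) ^ (q / p) * (1 : ℝ) ^ (1 - q / p) = |f x| ^ q := by
    intro x
    rw [Real.one_rpow, mul_one, ← Real.rpow_mul (abs_nonneg _), mul_div_cancel₀ _ hp.ne']
  simpa only [hpow, integral_const, smul_eq_mul, mul_one, measureReal_restrict_apply_univ] using
    integral_rpow_mul_rpow_le
      (Filter.Eventually.of_forall fun x => Real.rpow_nonneg (abs_nonneg (f x)) p)
      (Filter.Eventually.of_forall fun _ => zero_le_one) hf (integrableOn_const hs)
      (div_nonneg hq hp.le) (sub_nonneg.2 ((div_le_one hp).2 hqp)) (add_sub_cancel _ _)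

theorem integral_le_setIntegral_sublevel_add {V g : X → ℝ} (hV : Measurable V) (hV0 : 0 ≤ V)
    {c : ℝ} (hc : 0 < c) (hg0 : 0 ≤ g) (hg : Integrable g ν)
    (hVg : Integrable (fun x => V x * g x) ν) :
    ∫ x, g x ∂ν ≤ ∫ x in {x | V x < c}, g x ∂ν + c⁻¹ * ∫ x, V x * g x ∂ν := by
  have hs : MeasurableSet {x | V x < c} := measurableSet_lt hV measurable_const
  rw [← integral_add_compl hs hg, ← integral_const_mul]
  gcongr
  calc ∫ x in {x | V x < c}ᶜ, g x ∂ν ≤ ∫ x in {x | V x < c}ᶜ, c⁻¹ * (V x * g x) ∂ν := by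
        refine setIntegral_mono_on hg.integrableOn (hVg.const_mul _).integrableOn hs.compl ?_
        intro x hx
        rw [le_inv_mul_iff₀ hc]
        exact mul_le_mul_of_nonneg_right (not_lt.1 hx) (hg0 x)
    _ ≤ ∫ x, c⁻¹ * (V x * g x) ∂ν :=
        setIntegral_le_integral (hVg.const_mul _)
          (Filter.Eventually.of_forall fun x =>
            mul_nonneg (inv_nonneg.2 hc.le) (mul_nonneg (hV0 x) (hg0 x)))

theorem integral_sq_le_measureReal_rpow_mul_add {V u : X → ℝ} (hV : Measurable V) (hV0 : 0 ≤ V)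
    {c p : ℝ} (hc : 0 < c) (hs : ν {x | V x < c} ≠ ⊤) (hp : 2 ≤ p)
    (hu2 : Integrable (fun x => u x ^ 2) ν) (hup : Integrable (fun x => |u x| ^ p) ν)
    (hVu : Integrable (fun x => V x * u x ^ 2) ν) :
    ∫ x, u x ^ 2 ∂ν ≤ ν.real {x | V x < c} ^ ((p - 2) / p) * (∫ x, |u x| ^ p ∂ν) ^ (2 / p) +
      c⁻¹ * ∫ x, V x * u x ^ 2 ∂ν := by
  have hset := setIntegral_abs_rpow_le (f := u) hs (by linarith) zero_le_two hp hup.integrableOn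
  rw [show 1 - 2 / p = (p - 2) / p by field_simp] at hset
  simp only [Real.rpow_two, sq_abs] at hset
  refine (integral_le_setIntegral_sublevel_add hV hV0 hc (fun x => sq_nonneg _) hu2 hVu).trans ?_
  gcongr
  refine hset.trans ?_
  rw [mul_comm]
  gcongr
  · exact Filter.Eventually.of_forall fun x => Real.rpow_nonneg (abs_nonneg _) _
  · exact Measure.restrict_le_self

theorem integral_abs_rpow_le_of_sobolev_bound {V u : X → ℝ} (hV : Measurable V) (hV0 : 0 ≤ V)
    {c p r S μ G : ℝ} (hc : 0 < c) (hs : ν {x | V x < c} ≠ ⊤) (hs0 : ν {x | V x < c} ≠ 0)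
    (hp : 2 < p) (h2r : 2 ≤ r) (hrp : r ≤ p) (hS : 0 < S)
    (hμ : S ^ 2 * (c * ν.real {x | V x < c} ^ ((p - 2) / p))⁻¹ ≤ μ)
    (hu2 : Integrable (fun x => u x ^ 2) ν) (hup : Integrable (fun x => |u x| ^ p) ν)
    (hVu : Integrable (fun x => V x * u x ^ 2) ν)
    (hsob : (∫ x, |u x| ^ p ∂ν) ^ (2 / p) ≤ G / S ^ 2) :
    ∫ x, |u x| ^ r ∂ν ≤ ν.real {x | V x < c} ^ ((p - r) / p) * S ^ (-r) *
      (G + μ * ∫ x, V x * u x ^ 2 ∂ν) ^ (r / 2) := by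
  set A := ν.real {x | V x < c}
  set W := ∫ x, V x * u x ^ 2 ∂ν
  have hAe : 0 < A ^ ((p - 2) / p) :=
    Real.rpow_pos_of_pos (ENNReal.toReal_pos hs0 hs) _
  have hμc : c⁻¹ ≤ μ * (A ^ ((p - 2) / p) / S ^ 2) :=
    calc c⁻¹ = S ^ 2 * (c * A ^ ((p - 2) / p))⁻¹ * (A ^ ((p - 2) / p) / S ^ 2) := by
          field_simp
      _ ≤ μ * (A ^ ((p - 2) / p) / S ^ 2) := by gcongr
  have hW0 : 0 ≤ W := integral_nonneg fun x => mul_nonneg (hV0 x) (sq_nonneg _)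
  have hμW : 0 ≤ μ * W := mul_nonneg ((by positivity : (0 : ℝ) ≤ _).trans hμ) hW0
  have hG : 0 ≤ G := by
    have h := (Real.rpow_nonneg (integral_nonneg fun x => by positivity) _).trans hsob
    rwa [le_div_iff₀ (by positivity), zero_mul] at h
  have hL2 : ∫ x, u x ^ 2 ∂ν ≤ A ^ ((p - 2) / p) * ((G + μ * W) / S ^ 2) :=
    calc ∫ x, u x ^ 2 ∂ν ≤ A ^ ((p - 2) / p) * (∫ x, |u x| ^ p ∂ν) ^ (2 / p) + c⁻¹ * W :=
          integral_sq_le_measureReal_rpow_mul_add hV hV0 hc hs hp.le hu2 hup hVu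
      _ ≤ A ^ ((p - 2) / p) * (G / S ^ 2) + μ * (A ^ ((p - 2) / p) / S ^ 2) * W := by gcongr
      _ = A ^ ((p - 2) / p) * ((G + μ * W) / S ^ 2) := by ring
  have hinterp := integral_abs_rpow_le_interpolation (f := u) zero_le_two hp h2r hrp
    (by simpa only [Real.rpow_two, sq_abs] using hu2) hup
  simp only [Real.rpow_two, sq_abs] at hinterp
  exact hinterp.trans (rpow_mul_rpow_le_of_le_mul_of_rpow_le hp h2r hrp ENNReal.toReal_nonneg hS
    (add_nonneg hG hμW) (integral_nonneg fun x => sq_nonneg _)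
    (integral_nonneg fun x => by positivity) hL2
    (hsob.trans (div_le_div_of_nonneg_right (le_add_of_nonneg_right hμW) (by positivity))))

end

/-- Let `N ≥ 3`, `2 ≤ r ≤ 2*`, `V ≥ 0` with `0 < |{V < c₀}| < ∞`, `S` the
best Sobolev constant, and `μ ≥ μ₀ := S²(c₀|{V<c₀}|^{(2*-2)/2*})⁻¹`. Then for all
`u ∈ H¹(ℝᴺ)` with `‖u‖_μ² = ∫(|∇u|² + μVu²) < ∞`,
`∫|u|^r ≤ |{V<c₀}|^{(2*-r)/2*} S^{-r} ‖u‖_μ^r`. -/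
theorem stmt_2 (N : ℕ) (hN : 3 ≤ N) (r c₀ S μ : ℝ) (hr2 : 2 ≤ r) (hr2s : r ≤ twoStar N)
    (hc₀ : 0 < c₀) (hS : 0 < S)
    (V : EuclideanSpace ℝ (Fin N) → ℝ) (hVmeas : Measurable V) (hVpos : ∀ x, 0 ≤ V x)
    (hVfin : volume {x | V x < c₀} < ⊤) (hVne : 0 < volume {x | V x < c₀})
    (hμ : S ^ 2 * (c₀ * (volume {x | V x < c₀}).toReal ^ ((twoStar N - 2) / twoStar N))⁻¹ ≤ μ)
    (hSob : ∀ v : EuclideanSpace ℝ (Fin N) → ℝ, Differentiable ℝ v →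
      MemLp v 2 volume → MemLp v (ENNReal.ofReal (twoStar N)) volume →
      MemLp (fun x => ‖fderiv ℝ v x‖) 2 volume →
      S * (∫ x, |v x| ^ twoStar N) ^ (1 / twoStar N) ≤
        (∫ x, ‖fderiv ℝ v x‖ ^ 2) ^ ((1 : ℝ) / 2))
    (u : EuclideanSpace ℝ (Fin N) → ℝ) (hu : Differentiable ℝ u)
    (hu2 : MemLp u 2 volume) (hu2s : MemLp u (ENNReal.ofReal (twoStar N)) volume)
    (hugrad : MemLp (fun x => ‖fderiv ℝ u x‖) 2 volume)
    (hVu : Integrable (fun x => V x * (u x) ^ 2)) :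
    (∫ x, |u x| ^ r) ≤
      (volume {x | V x < c₀}).toReal ^ ((twoStar N - r) / twoStar N) * S ^ (-r) *
        (∫ x, (‖fderiv ℝ u x‖ ^ 2 + μ * V x * (u x) ^ 2)) ^ (r / 2) := by
  set p := twoStar N
  have hp : 2 < p := two_lt_twoStar hN
  have hu_p : Integrable (fun x => |u x| ^ p) := by
    simpa [ENNReal.toReal_ofReal (by linarith : 0 ≤ p)] using
      hu2s.integrable_norm_rpow (by simpa using hp.trans' two_pos) ENNReal.ofReal_ne_top
  have hT : ∫ x, (‖fderiv ℝ u x‖ ^ 2 + μ * V x * u x ^ 2) =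
      (∫ x, ‖fderiv ℝ u x‖ ^ 2) + μ * ∫ x, V x * u x ^ 2 := by
    simp_rw [mul_assoc μ]
    rw [integral_add hugrad.integrable_sq (hVu.const_mul μ), integral_const_mul]
  rw [hT]
  exact integral_abs_rpow_le_of_sobolev_bound hVmeas hVpos hc₀ hVfin.ne hVne.ne' hp hr2 hr2s hS
    hμ hu2.integrable_sq hu_p hVu
    (rpow_two_div_le_div_sq hS (integral_nonneg fun x => by positivity)
      (integral_nonneg fun x => by positivity) (hSob u hu hu2 hu2s hugrad))
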